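/- A trim NFA N is atomic if and only if N^{R D} (the determinization of the reversal of N) is a minimal DFA, i.e., a DFA with the fewest states accepting L(N)^R. -/

import Mathlib

/-! Basic definitions: left quotients, atoms, and operations on finite automata. -/

/-- The left quotient of a language `L` by a word `w`: `w⁻¹L = {x | w ++ x ∈ L}`. -/
def leftQuot {α : Type} (L : Language α) (w : List α) : Language α := {x | w ++ x ∈ L}

/-- The set of all left quotients of `L`. -/
def quots {α : Type} (L : Language α) : Set (Language α) := {K | ∃ w : List α, K = leftQuot L w}

/-- `A` is an atom of `L`: a non-empty intersection `K̃_0 ∩ ⋯ ∩ K̃_{n−1}` where each `K̃_i` is a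
quotient `K_i` of `L` or its complement (`S` is the set of uncomplemented quotients, so a word is
in the intersection iff it belongs exactly to the quotients in `S`). -/
def IsAtomOf {α : Type} (L A : Language α) : Prop :=
  (∃ x, x ∈ A) ∧ ∃ S : Set (Language α), S ⊆ quots L ∧
    A = {x | ∀ K ∈ quots L, (x ∈ K ↔ K ∈ S)}

/-- A positive atom: at least one term of its defining intersection is uncomplemented,
equivalently the atom is contained in some quotient of `L`. -/
def IsPositiveAtomOf {α : Type} (L A : Language α) : Prop :=
  IsAtomOf L A ∧ ∃ K ∈ quots L, ∀ x ∈ A, x ∈ K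

namespace NFA

/-- The right language of a state `q`: words accepted starting from `q`. -/
def rightLang {α σ : Type} (M : NFA α σ) (q : σ) : Language α :=
  {w | ∃ p ∈ M.accept, p ∈ M.evalFrom {q} w}

/-- The left language of a state `q`: words leading from the initial states to `q`. -/
def leftLang {α σ : Type} (M : NFA α σ) (q : σ) : Language α :=
  {w | q ∈ M.eval w}

/-- An NFA is trim if every state has a non-empty left language and right language. -/
def IsTrim {α σ : Type} (M : NFA α σ) : Prop :=
  ∀ q, (∃ w, w ∈ M.leftLang q) ∧ (∃ w, w ∈ M.rightLang q)

/-- An NFA is reduced if distinct states have distinct right languages. -/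
def IsReduced {α σ : Type} (M : NFA α σ) : Prop :=
  ∀ q p, M.rightLang q = M.rightLang p → q = p

/-- An NFA is atomic if the right language of every state is a union of positive atoms of the
accepted language. -/
def IsAtomic {α σ : Type} (M : NFA α σ) : Prop :=
  ∀ q, ∃ 𝒜 : Set (Language α), (∀ A ∈ 𝒜, IsPositiveAtomOf M.accepts A) ∧
    M.rightLang q = {w | ∃ A ∈ 𝒜, w ∈ A}

/-- Reversal of an NFA: interchange initial and final states and reverse all transitions. -/
def rev {α σ : Type} (M : NFA α σ) : NFA α σ :=
  ⟨fun q a => {p | q ∈ M.step p a}, M.accept, M.start⟩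

/-- States of the determinization of an NFA: the subsets of states reachable from the initial
subset. -/
def detStates {α σ : Type} (M : NFA α σ) : Type := {S : Set σ // ∃ w, M.eval w = S}

instance {α σ : Type} [Finite σ] (M : NFA α σ) : Finite M.detStates :=
  Subtype.finite

/-- Determinization of an NFA by the subset construction, keeping only the subsets reachable
from the initial subset. -/
def det {α σ : Type} (M : NFA α σ) : DFA α M.detStates where
  step S a := ⟨M.stepSet S.1 a, by
    obtain ⟨w, hw⟩ := S.2
    exact ⟨w ++ [a], by rw [NFA.eval_append_singleton, hw]⟩⟩
  start := ⟨M.start, [], rfl⟩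
  accept := {S | ∃ p ∈ M.accept, p ∈ S.1}

end NFA

/-- Reversal of a DFA, yielding an NFA. -/
def DFA.rev {α σ : Type} (M : DFA α σ) : NFA α σ :=
  ⟨fun q a => {p | M.step p a = q}, M.accept, {M.start}⟩

/-- A DFA is minimal if no DFA accepting the same language has fewer states. -/
def DFA.IsMinimal {α σ : Type} (M : DFA α σ) : Prop :=
  ∀ (σ' : Type) (_ : Finite σ') (M' : DFA α σ'), M'.accepts = M.accepts →
    Nat.card σ ≤ Nat.card σ'

/-!
The state of `N^{RD}` reached by `w` is `{q | wᴿ ∈ rightLang q}`, and its right language is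
the left quotient `w⁻¹ Lᴿ`. Two words `x`, `y` lie in the same atom of `L` iff every `u` has
`ux ∈ L ↔ uy ∈ L`, i.e. iff `(xᴿ)⁻¹ Lᴿ = (yᴿ)⁻¹ Lᴿ`. A DFA all of whose states are reachable
is minimal iff distinct states have distinct right languages, so `N^{RD}` is minimal iff the set
`{q | wᴿ ∈ rightLang q}` only depends on the atom of `wᴿ`, i.e. iff every right language of `N`
is a union of atoms. Trimness makes these atoms positive: if `v` leads to `q` and
`x ∈ rightLang q`, then `x ∈ v⁻¹ L`.
-/

open Function

namespace DFA

variable {α σ : Type} (D : DFA α σ)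

theorem injective_acceptsFrom_of_isMinimal [Finite σ] (hreach : Surjective D.eval)
    (hmin : D.IsMinimal) : Injective D.acceptsFrom := by
  let f : σ → Set.range D.accepts.leftQuotient := fun s =>
    ⟨D.acceptsFrom s, by
      obtain ⟨w, rfl⟩ := hreach s
      exact ⟨w, Language.leftQuotient_accepts_apply D w⟩⟩
  have hf : Surjective f := by
    rintro ⟨_, w, rfl⟩
    exact ⟨D.eval w, Subtype.ext (Language.leftQuotient_accepts_apply D w).symm⟩
  have : Finite (Set.range D.accepts.leftQuotient) := Finite.of_surjective f hf
  have hbij := hf.bijective_of_nat_card_le (hmin _ inferInstance _ D.accepts.accepts_toDFA)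
  exact fun s t hst => hbij.1 (Subtype.ext hst)

theorem isMinimal_of_injective_acceptsFrom (hreach : Surjective D.eval)
    (hinj : Injective D.acceptsFrom) : D.IsMinimal := by
  intro σ' _ D' hD'
  choose w hw using hreach
  refine Nat.card_le_card_of_injective (fun s => D'.eval (w s)) fun s t hst => ?_
  have hquot := congrArg D'.acceptsFrom hst
  simp only [← Language.leftQuotient_accepts_apply, hD'] at hquot
  rw [← hw s, ← hw t]
  apply hinj
  simpa only [← Language.leftQuotient_accepts_apply] using hquot

theorem isMinimal_iff_injective_acceptsFrom [Finite σ] (hreach : Surjective D.eval) :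
    D.IsMinimal ↔ Injective D.acceptsFrom :=
  ⟨D.injective_acceptsFrom_of_isMinimal hreach, D.isMinimal_of_injective_acceptsFrom hreach⟩

end DFA

section Atoms

variable {α : Type} (L : Language α)

def atomOf (x : List α) : Language α := {y | ∀ K ∈ quots L, y ∈ K ↔ x ∈ K}

theorem mem_atomOf_self (x : List α) : x ∈ atomOf L x := fun _ _ => Iff.rfl

theorem mem_atomOf_iff_leftQuotient_reverse (x y : List α) :
    y ∈ atomOf L x ↔ L.reverse.leftQuotient y.reverse = L.reverse.leftQuotient x.reverse := by
  simp only [Language.ext_iff, Language.mem_leftQuotient, Language.mem_reverse,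
    List.reverse_append, List.reverse_reverse]
  constructor
  · exact fun h u => h _ ⟨u.reverse, rfl⟩
  · rintro h K ⟨u, rfl⟩
    have hu := h u.reverse
    rwa [List.reverse_reverse] at hu

variable {L} in
theorem IsAtomOf.eq_atomOf {A : Language α} (hA : IsAtomOf L A) {x : List α} (hx : x ∈ A) :
    A = atomOf L x := by
  obtain ⟨-, S, -, rfl⟩ := hA
  ext y
  exact forall₂_congr fun K hK => iff_congr Iff.rfl (hx K hK).symm

theorem isPositiveAtomOf_atomOf {w x : List α} (hx : w ++ x ∈ L) :
    IsPositiveAtomOf L (atomOf L x) :=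
  ⟨⟨⟨x, mem_atomOf_self L x⟩, {K ∈ quots L | x ∈ K}, fun _ hK => hK.1,
      Set.ext fun _ => forall₂_congr fun _ hK => by simp [hK]⟩,
    leftQuot L w, ⟨w, rfl⟩, fun _ hy => (hy _ ⟨w, rfl⟩).2 hx⟩

end Atoms

namespace NFA

variable {α σ : Type} (M : NFA α σ)

theorem append_mem_accepts {q : σ} {w x : List α} (hw : w ∈ M.leftLang q)
    (hx : x ∈ M.rightLang q) : w ++ x ∈ M.accepts := by
  obtain ⟨p, hp, hpx⟩ := hx
  rw [mem_accepts, evalFrom_append]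
  exact ⟨p, hp, mem_evalFrom_iff_exists.2 ⟨q, hw, hpx⟩⟩

theorem isAtomic_iff (htrim : M.IsTrim) :
    M.IsAtomic ↔
      ∀ q, ∀ x ∈ M.rightLang q, ∀ y ∈ atomOf M.accepts x, y ∈ M.rightLang q := by
  constructor
  · intro hM q x hx
    obtain ⟨𝒜, hpos, heq⟩ := hM q
    rw [heq] at hx ⊢
    obtain ⟨A, hA, hxA⟩ := hx
    rw [← (hpos A hA).1.eq_atomOf hxA]
    exact fun y hy => ⟨A, hA, hy⟩
  · intro hsat q
    obtain ⟨⟨w, hw⟩, -⟩ := htrim q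
    refine ⟨{A | ∃ x ∈ M.rightLang q, A = atomOf M.accepts x}, ?_, ?_⟩
    · rintro _ ⟨x, hx, rfl⟩
      exact isPositiveAtomOf_atomOf _ (M.append_mem_accepts hw hx)
    · ext y
      refine ⟨fun hy => ⟨_, ⟨y, hy, rfl⟩, mem_atomOf_self _ y⟩, ?_⟩
      rintro ⟨_, ⟨x, hx, rfl⟩, hy⟩
      exact hsat q x hx _ hy

theorem mem_rev_eval {w : List α} {q : σ} :
    q ∈ M.rev.eval w ↔ w.reverse ∈ M.rightLang q := by
  have h := (M.disjoint_evalFrom_reverse_iff (x := w) (S := {q}) (S' := M.accept)).not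
  rwa [Set.disjoint_singleton_left, not_not, Set.not_disjoint_iff] at h

theorem rev_accepts : M.rev.accepts = M.accepts.reverse :=
  Set.ext fun _ => M.mem_accepts_reverse

theorem det_eval (w : List α) : (M.det.eval w).1 = M.eval w := by
  induction w using List.reverseRecOn with
  | nil => rfl
  | append_singleton w a ih =>
    rw [DFA.eval_append_singleton, eval_append_singleton, ← ih]
    rfl

theorem det_eval_surjective : Surjective M.det.eval := fun S =>
  let ⟨w, hw⟩ := S.2
  ⟨w, Subtype.ext ((M.det_eval w).trans hw)⟩

theorem det_accepts : M.det.accepts = M.accepts := by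
  ext w
  rw [DFA.mem_accepts, mem_accepts]
  show (∃ p ∈ M.accept, p ∈ (M.det.eval w).1) ↔ _
  rw [det_eval]
  rfl

theorem mem_rev_det_eval {w : List α} {q : σ} :
    q ∈ (M.rev.det.eval w).1 ↔ w.reverse ∈ M.rightLang q := by
  rw [det_eval, mem_rev_eval]

theorem rev_det_acceptsFrom_eval (w : List α) :
    M.rev.det.acceptsFrom (M.rev.det.eval w) = M.accepts.reverse.leftQuotient w := by
  rw [← Language.leftQuotient_accepts_apply, det_accepts, rev_accepts]

theorem injective_rev_det_acceptsFrom_iff :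
    Injective M.rev.det.acceptsFrom ↔
      ∀ q, ∀ x ∈ M.rightLang q, ∀ y ∈ atomOf M.accepts x, y ∈ M.rightLang q := by
  constructor
  · intro hinj q x hx y hy
    rw [mem_atomOf_iff_leftQuotient_reverse, ← rev_det_acceptsFrom_eval,
      ← rev_det_acceptsFrom_eval] at hy
    rw [← y.reverse_reverse, ← mem_rev_det_eval, hinj hy, mem_rev_det_eval, x.reverse_reverse]
    exact hx
  · intro hsat s t hst
    obtain ⟨u, rfl⟩ := M.rev.det_eval_surjective s
    obtain ⟨v, rfl⟩ := M.rev.det_eval_surjective t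
    rw [rev_det_acceptsFrom_eval, rev_det_acceptsFrom_eval] at hst
    have hvu : v.reverse ∈ atomOf M.accepts u.reverse := by
      rw [mem_atomOf_iff_leftQuotient_reverse, u.reverse_reverse, v.reverse_reverse]
      exact hst.symm
    have huv : u.reverse ∈ atomOf M.accepts v.reverse := by
      rw [mem_atomOf_iff_leftQuotient_reverse, u.reverse_reverse, v.reverse_reverse]
      exact hst
    refine Subtype.ext (Set.ext fun q => ?_)
    rw [mem_rev_det_eval, mem_rev_det_eval]
    exact ⟨fun hu => hsat q _ hu _ hvu, fun hv => hsat q _ hv _ huv⟩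

end NFA

theorem atomic_iff_rev_det_minimal_general {α σ : Type} [Finite σ] (M : NFA α σ)
    (htrim : M.IsTrim) :
    M.IsAtomic ↔
      (M.rev.det.accepts = M.accepts.reverse ∧
        ∀ (σ' : Type) (_ : Finite σ') (D' : DFA α σ'), D'.accepts = M.accepts.reverse →
          Nat.card M.rev.detStates ≤ Nat.card σ') := by
  have hacc : M.rev.det.accepts = M.accepts.reverse := by
    rw [NFA.det_accepts, NFA.rev_accepts]
  rw [M.isAtomic_iff htrim, ← M.injective_rev_det_acceptsFrom_iff,
    ← M.rev.det.isMinimal_iff_injective_acceptsFrom M.rev.det_eval_surjective, DFA.IsMinimal,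
    hacc]
  exact (and_iff_right rfl).symm

/-- A trim NFA `N` is atomic iff `N^{R D}` (the determinization of the
reversal of `N`) is a minimal DFA, i.e., a DFA with the fewest states accepting `L(N)^R`. -/
theorem atomic_iff_rev_det_minimal {α σ : Type} [Finite α] [Finite σ] (M : NFA α σ)
    (htrim : M.IsTrim) :
    M.IsAtomic ↔
      (M.rev.det.accepts = M.accepts.reverse ∧
        ∀ (σ' : Type) (_ : Finite σ') (D' : DFA α σ'), D'.accepts = M.accepts.reverse →
          Nat.card M.rev.detStates ≤ Nat.card σ') :=
  atomic_iff_rev_det_minimal_general M htrim
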